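/- arXiv:2503.03658 — 4 statements merged into one kernel-verified Lean document; each statement's English description precedes it below -/
import Mathlib

section
/- Let X be a real Banach space, let L : X → X be a continuous linear map with operator norm ‖L‖_{L(X)} := sup_{‖x‖=1} ‖Lx‖ satisfying ‖L‖_{L(X)} < 1, and let B : X × X → X be a continuous bilinear map with norm ‖B‖_{L(X×X)} := sup_{‖x‖=‖y‖=1} ‖B(x,y)‖ satisfying ‖B‖_{L(X×X)} > 0. If x₀ ∈ X satisfies ‖x₀‖ < (1 − ‖L‖_{L(X)})² / (4‖B‖_{L(X×X)}), then the equation x = x₀ + Lx + B(x,x) has exactly one solution x in the closed ball of center 0 and radius (1 − ‖L‖_{L(X)}) / (2‖B‖_{L(X×X)}) in X. -/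
/-!
Write `l = ‖L‖`, `b = ‖B‖` and `Φ x = x₀ + L x + B x x`. Since
`B x x - B y y = B x (x - y) + B (x - y) y`, the map `Φ` is `(l + b (‖x‖ + ‖y‖))`-Lipschitz
between `x` and `y`, and `‖Φ x‖ ≤ ‖x₀‖ + l ‖x‖ + b ‖x‖²`. On the closed ball of radius
`ρ = 2‖x₀‖ / (1 - l)` this makes `Φ` a self-map with constant `l + 2bρ < 1`, so Banach's fixed
point theorem gives a fixed point `x` with `‖x‖ ≤ ρ < R = (1 - l) / (2b)`. Any other fixed point
`y` with `‖y‖ ≤ R` satisfies `‖y - x‖ ≤ (l + b (‖y‖ + ‖x‖)) ‖y - x‖` with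
`l + b (‖y‖ + ‖x‖) < l + 2bR = 1`, hence `y = x`.
-/

open Metric Set

namespace QuadraticFixedPoint

variable {𝕜 E : Type*} [NontriviallyNormedField 𝕜] [NormedAddCommGroup E] [NormedSpace 𝕜 E]

def map (x₀ : E) (L : E →L[𝕜] E) (B : E →L[𝕜] E →L[𝕜] E) (x : E) : E :=
  x₀ + L x + B x x

variable (x₀ : E) (L : E →L[𝕜] E) (B : E →L[𝕜] E →L[𝕜] E)

theorem norm_map_sub_map_le (x y : E) :
    ‖map x₀ L B x - map x₀ L B y‖ ≤ (‖L‖ + ‖B‖ * (‖x‖ + ‖y‖)) * ‖x - y‖ := by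
  have hsplit : map x₀ L B x - map x₀ L B y = L (x - y) + (B x (x - y) + B (x - y) y) := by
    simp only [map, map_sub, sub_apply]
    abel
  calc ‖map x₀ L B x - map x₀ L B y‖
      ≤ ‖L (x - y)‖ + (‖B x (x - y)‖ + ‖B (x - y) y‖) := by
        rw [hsplit]
        exact (norm_add_le _ _).trans (by gcongr; exact norm_add_le _ _)
    _ ≤ ‖L‖ * ‖x - y‖ + (‖B‖ * ‖x‖ * ‖x - y‖ + ‖B‖ * ‖x - y‖ * ‖y‖) := by
        gcongr
        exacts [L.le_opNorm _, B.le_opNorm₂ _ _, B.le_opNorm₂ _ _]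
    _ = (‖L‖ + ‖B‖ * (‖x‖ + ‖y‖)) * ‖x - y‖ := by ring

theorem norm_map_le (x : E) : ‖map x₀ L B x‖ ≤ ‖x₀‖ + ‖L‖ * ‖x‖ + ‖B‖ * ‖x‖ ^ 2 :=
  calc ‖map x₀ L B x‖ ≤ ‖x₀‖ + ‖L x‖ + ‖B x x‖ := norm_add₃_le
    _ ≤ ‖x₀‖ + ‖L‖ * ‖x‖ + ‖B‖ * ‖x‖ * ‖x‖ := by
        gcongr
        exacts [L.le_opNorm _, B.le_opNorm₂ _ _]
    _ = ‖x₀‖ + ‖L‖ * ‖x‖ + ‖B‖ * ‖x‖ ^ 2 := by ring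

theorem mapsTo_closedBall {r : ℝ} (hr : ‖x₀‖ + ‖L‖ * r + ‖B‖ * r ^ 2 ≤ r) :
    MapsTo (map x₀ L B) (closedBall 0 r) (closedBall 0 r) := by
  intro x hx
  rw [mem_closedBall_zero_iff] at hx ⊢
  calc ‖map x₀ L B x‖ ≤ ‖x₀‖ + ‖L‖ * ‖x‖ + ‖B‖ * ‖x‖ ^ 2 := norm_map_le x₀ L B x
    _ ≤ ‖x₀‖ + ‖L‖ * r + ‖B‖ * r ^ 2 := by gcongr
    _ ≤ r := hr

theorem lipschitzOnWith_closedBall (r : ℝ) :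
    LipschitzOnWith (‖L‖ + 2 * ‖B‖ * r).toNNReal (map x₀ L B) (closedBall 0 r) := by
  refine LipschitzOnWith.of_dist_le' fun x hx y hy ↦ ?_
  rw [mem_closedBall_zero_iff] at hx hy
  rw [dist_eq_norm, dist_eq_norm]
  calc ‖map x₀ L B x - map x₀ L B y‖ ≤ (‖L‖ + ‖B‖ * (‖x‖ + ‖y‖)) * ‖x - y‖ :=
        norm_map_sub_map_le x₀ L B x y
    _ ≤ (‖L‖ + ‖B‖ * (r + r)) * ‖x - y‖ := by gcongr
    _ = (‖L‖ + 2 * ‖B‖ * r) * ‖x - y‖ := by ring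

theorem exists_fixedPoint_mem_closedBall [CompleteSpace E] {r : ℝ} (hr : 0 ≤ r)
    (hself : ‖x₀‖ + ‖L‖ * r + ‖B‖ * r ^ 2 ≤ r) (hcontr : ‖L‖ + 2 * ‖B‖ * r < 1) :
    ∃ x ∈ closedBall 0 r, x = map x₀ L B x := by
  have hmaps := mapsTo_closedBall x₀ L B hself
  have hK : ContractingWith (‖L‖ + 2 * ‖B‖ * r).toNNReal (hmaps.restrict _ _ _) :=
    ⟨by rwa [Real.toNNReal_lt_one], (lipschitzOnWith_closedBall x₀ L B r).mapsToRestrict hmaps⟩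
  obtain ⟨x, hx, hfix, -⟩ := hK.exists_fixedPoint' isClosed_closedBall.isComplete hmaps
    (mem_closedBall_self hr) (edist_ne_top _ _)
  exact ⟨x, hx, hfix.symm⟩

theorem eq_of_fixedPoints {x y : E} (hx : x = map x₀ L B x) (hy : y = map x₀ L B y)
    (hxy : ‖L‖ + ‖B‖ * (‖x‖ + ‖y‖) < 1) : x = y := by
  have hle : ‖x - y‖ ≤ (‖L‖ + ‖B‖ * (‖x‖ + ‖y‖)) * ‖x - y‖ := by
    conv_lhs => rw [hx, hy]
    exact norm_map_sub_map_le x₀ L B x y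
  have hzero : ‖x - y‖ ≤ 0 := by nlinarith [norm_nonneg (x - y)]
  exact sub_eq_zero.mp (norm_le_zero_iff.mp hzero)

theorem radius_bounds {l b a : ℝ} (hl : l < 1) (hb : 0 < b) (ha : 0 ≤ a)
    (h : a < (1 - l) ^ 2 / (4 * b)) :
    a + l * (2 * a / (1 - l)) + b * (2 * a / (1 - l)) ^ 2 ≤ 2 * a / (1 - l) ∧
      l + 2 * b * (2 * a / (1 - l)) < 1 ∧ 2 * a / (1 - l) < (1 - l) / (2 * b) := by
  have h1l : 0 < 1 - l := by linarith
  rw [lt_div_iff₀ (by positivity)] at h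
  refine ⟨?_, ?_, ?_⟩
  · have hgap : 2 * a / (1 - l) - (a + l * (2 * a / (1 - l)) + b * (2 * a / (1 - l)) ^ 2) =
        a * ((1 - l) ^ 2 - 4 * b * a) / (1 - l) ^ 2 := by
      field_simp
      ring
    rw [← sub_nonneg, hgap]
    exact div_nonneg (mul_nonneg ha (by linarith)) (by positivity)
  · rw [← lt_sub_iff_add_lt', mul_div_assoc', div_lt_iff₀ h1l]
    nlinarith
  · rw [div_lt_div_iff₀ h1l (by positivity)]
    nlinarith

end QuadraticFixedPoint

open QuadraticFixedPoint in
/-- **Fixed point lemma (Chemin).** Let `X` be a real Banach space, `L : X → X` a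
continuous linear map with operator norm `< 1`, and `B : X × X → X` a continuous
bilinear map with positive norm. If `‖x₀‖ < (1 - ‖L‖)² / (4‖B‖)`, then the equation
`x = x₀ + L x + B (x, x)` has exactly one solution in the closed ball of center `0`
and radius `(1 - ‖L‖) / (2‖B‖)`. -/
theorem fixed_point_lemma
    {X : Type*} [NormedAddCommGroup X] [NormedSpace ℝ X] [CompleteSpace X]
    (L : X →L[ℝ] X) (B : X →L[ℝ] X →L[ℝ] X)
    (hL : ‖L‖ < 1) (hB : 0 < ‖B‖)
    (x₀ : X) (hx₀ : ‖x₀‖ < (1 - ‖L‖) ^ 2 / (4 * ‖B‖)) :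
    ∃! x : X, ‖x‖ ≤ (1 - ‖L‖) / (2 * ‖B‖) ∧ x = x₀ + L x + B x x := by
  obtain ⟨hself, hcontr, hρR⟩ := radius_bounds hL hB (norm_nonneg x₀) hx₀
  have h1L : 0 < 1 - ‖L‖ := by linarith
  obtain ⟨x, hx, hfix⟩ :=
    exists_fixedPoint_mem_closedBall x₀ L B (by positivity) hself hcontr
  rw [mem_closedBall_zero_iff] at hx
  refine ⟨x, ⟨hx.trans hρR.le, hfix⟩, fun y ⟨hy, hyfix⟩ ↦ eq_of_fixedPoints x₀ L B hyfix hfix ?_⟩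
  calc ‖L‖ + ‖B‖ * (‖y‖ + ‖x‖)
      < ‖L‖ + ‖B‖ * ((1 - ‖L‖) / (2 * ‖B‖) + (1 - ‖L‖) / (2 * ‖B‖)) := by
        gcongr ‖L‖ + ‖B‖ * ?_
        exact add_lt_add_of_le_of_lt hy (hx.trans_lt hρR)
    _ = 1 := by
        field_simp
        ring
end

section
/- Let f and g be two infinitely differentiable real-valued functions on ℝ. For every integer n ≥ 1 and every t ∈ ℝ, one has the identity (d/dt)^n [ t^n f(t) g(t) ] = Σ_{j=0}^{n} C(n,j) · (d/dt)^j ( t^j f(t) ) · (d/dt)^{n-j} ( t^{n-j} g(t) ) − n · Σ_{j=0}^{n-1} C(n-1,j) · (d/dt)^j ( t^j f(t) ) · (d/dt)^{n-1-j} ( t^{n-1-j} g(t) ), where C(n,j) denotes the binomial coefficient and (d/dt)^j(t^j f(t)) means the j-th derivative of the function t ↦ t^j f(t). -/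
open scoped ContDiff


open Finset
open scoped ContDiff

lemma DZ.itd_add {f g : ℝ → ℝ} (hf : ContDiff ℝ ∞ f) (hg : ContDiff ℝ ∞ g) (n : ℕ) (t : ℝ) :
    iteratedDeriv n (fun s => f s + g s) t = iteratedDeriv n f t + iteratedDeriv n g t := by
  have h1 : ContDiff ℝ (n : WithTop ℕ∞) f := hf.of_le (by exact_mod_cast le_top)
  have h2 : ContDiff ℝ (n : WithTop ℕ∞) g := hg.of_le (by exact_mod_cast le_top)
  simp [iteratedDeriv_eq_iteratedFDeriv]
  rw [show (fun s => f s + g s) = f + g from rfl, iteratedFDeriv_add_apply h1.contDiffAt h2.contDiffAt]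
  simp

lemma DZ.itd_smooth {f : ℝ → ℝ} (hf : ContDiff ℝ ∞ f) (n : ℕ) :
    ContDiff ℝ ∞ (iteratedDeriv n f) := by
  rw [iteratedDeriv_eq_iterate]; exact hf.iterate_deriv n

lemma DZ.itd_mul_id (n : ℕ) : ∀ (q : ℝ → ℝ), ContDiff ℝ ∞ q → ∀ t : ℝ,
    iteratedDeriv (n + 1) (fun s => s * q s) t
      = t * iteratedDeriv (n + 1) q t + ((n : ℝ) + 1) * iteratedDeriv n q t := by
  induction n with
  | zero =>
    intro q hq t
    have hdq : Differentiable ℝ q := hq.differentiable (by simp)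
    rw [iteratedDeriv_one, deriv_fun_mul (c := fun s => s) differentiableAt_id (hdq t)]
    simp [iteratedDeriv_one, iteratedDeriv_zero]
    ring
  | succ n ih =>
    intro q hq t
    have hdq : Differentiable ℝ q := hq.differentiable (by simp)
    have hq' : ContDiff ℝ ∞ (deriv q) := (contDiff_infty_iff_deriv.mp hq).2
    have hd : deriv (fun s => s * q s) = fun s => q s + s * deriv q s := by
      funext s
      rw [deriv_fun_mul (c := fun s => s) differentiableAt_id (hdq s)]
      simp
    rw [iteratedDeriv_succ' (n := n + 1), hd,
      DZ.itd_add (g := fun s => s * deriv q s) hq ((contDiff_id (E := ℝ)).mul hq') (n + 1) t, ih (deriv q) hq' t,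
      ← iteratedDeriv_succ', ← iteratedDeriv_succ']
    push_cast
    ring

lemma DZ.pow_smooth {h : ℝ → ℝ} (hh : ContDiff ℝ ∞ h) (k : ℕ) :
    ContDiff ℝ ∞ (fun s : ℝ => s ^ k * h s) :=
  ((contDiff_id (𝕜 := ℝ) (E := ℝ)).pow k).mul hh

lemma DZ.pow_rec {h : ℝ → ℝ} (hh : ContDiff ℝ ∞ h) (k : ℕ) (t : ℝ) :
    iteratedDeriv (k + 1) (fun s => s ^ (k + 1) * h s) t
      = t * deriv (iteratedDeriv k (fun s => s ^ k * h s)) t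
        + ((k : ℝ) + 1) * iteratedDeriv k (fun s => s ^ k * h s) t := by
  have he : (fun s : ℝ => s ^ (k + 1) * h s) = fun s => s * (s ^ k * h s) := by
    funext s; ring
  rw [he, DZ.itd_mul_id k _ (DZ.pow_smooth hh k) t, iteratedDeriv_succ]

lemma DZ.theta {h : ℝ → ℝ} (hh : ContDiff ℝ ∞ h) (k : ℕ) (t : ℝ) :
    t * deriv (iteratedDeriv k (fun s => s ^ k * h s)) t
      = iteratedDeriv (k + 1) (fun s => s ^ (k + 1) * h s) t
        - ((k : ℝ) + 1) * iteratedDeriv k (fun s => s ^ k * h s) t := by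
  rw [DZ.pow_rec hh k t]; ring

noncomputable def DZ.S (f g : ℝ → ℝ) (n : ℕ) (t : ℝ) : ℝ :=
  ∑ j ∈ Finset.range (n + 1), (n.choose j : ℝ) *
    (iteratedDeriv j (fun s => s ^ j * f s) t *
      iteratedDeriv (n - j) (fun s => s ^ (n - j) * g s) t)

lemma DZ.S_diff {f g : ℝ → ℝ} (hf : ContDiff ℝ ∞ f) (hg : ContDiff ℝ ∞ g) (n : ℕ) :
    Differentiable ℝ (DZ.S f g n) := by
  apply Differentiable.fun_sum
  intro j _
  exact (((DZ.itd_smooth (DZ.pow_smooth hf j) j).differentiable (by simp)).mul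
    ((DZ.itd_smooth (DZ.pow_smooth hg (n - j)) (n - j)).differentiable
      (by simp))).const_mul _

lemma DZ.S_rec {f g : ℝ → ℝ} (hf : ContDiff ℝ ∞ f) (hg : ContDiff ℝ ∞ g) (n : ℕ) (t : ℝ) :
    DZ.S f g (n + 1) t = t * deriv (DZ.S f g n) t + ((n : ℝ) + 2) * DZ.S f g n t := by
  have dA : ∀ j, DifferentiableAt ℝ (iteratedDeriv j (fun s => s ^ j * f s)) t := fun j =>
    (DZ.itd_smooth (DZ.pow_smooth hf j) j).differentiable (by simp) t
  have dB : ∀ j, DifferentiableAt ℝ (iteratedDeriv j (fun s => s ^ j * g s)) t := fun j =>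
    (DZ.itd_smooth (DZ.pow_smooth hg j) j).differentiable (by simp) t
  have hS : DZ.S f g n = fun u => ∑ j ∈ Finset.range (n + 1), (n.choose j : ℝ) *
      (iteratedDeriv j (fun s => s ^ j * f s) u *
        iteratedDeriv (n - j) (fun s => s ^ (n - j) * g s) u) := rfl
  have hderiv : deriv (DZ.S f g n) t = ∑ j ∈ Finset.range (n + 1), (n.choose j : ℝ) *
      (deriv (iteratedDeriv j (fun s => s ^ j * f s)) t *
          iteratedDeriv (n - j) (fun s => s ^ (n - j) * g s) t
        + iteratedDeriv j (fun s => s ^ j * f s) t *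
          deriv (iteratedDeriv (n - j) (fun s => s ^ (n - j) * g s)) t) := by
    rw [hS, deriv_fun_sum (A := fun j u => (n.choose j : ℝ) *
        (iteratedDeriv j (fun s => s ^ j * f s) u *
          iteratedDeriv (n - j) (fun s => s ^ (n - j) * g s) u))
      (fun j _ => (((dA j).fun_mul (dB (n - j)))).const_mul _)]
    refine Finset.sum_congr rfl fun j _ => ?_
    rw [deriv_const_mul _ ((dA j).fun_mul (dB (n - j))), deriv_fun_mul (dA j) (dB (n - j))]
  have step1 : t * deriv (DZ.S f g n) t + ((n : ℝ) + 2) * DZ.S f g n t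
      = (∑ j ∈ Finset.range (n + 1), (n.choose j : ℝ) *
          (iteratedDeriv (j + 1) (fun s => s ^ (j + 1) * f s) t *
            iteratedDeriv (n - j) (fun s => s ^ (n - j) * g s) t))
        + ∑ j ∈ Finset.range (n + 1), (n.choose j : ℝ) *
            (iteratedDeriv j (fun s => s ^ j * f s) t *
              iteratedDeriv (n + 1 - j) (fun s => s ^ (n + 1 - j) * g s) t) := by
    rw [hderiv, hS, Finset.mul_sum, Finset.mul_sum, ← Finset.sum_add_distrib,
      ← Finset.sum_add_distrib]
    refine Finset.sum_congr rfl fun j hj => ?_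
    have hj' : j ≤ n := Nat.lt_succ_iff.mp (Finset.mem_range.mp hj)
    have hnj : ((n - j : ℕ) : ℝ) = (n : ℝ) - j := Nat.cast_sub hj'
    have hidx : n - j + 1 = n + 1 - j := by omega
    have e1 := DZ.theta hf j t
    have e2 := DZ.theta hg (n - j) t
    rw [hidx, hnj] at e2
    set a := iteratedDeriv j (fun s => s ^ j * f s) t
    set a' := iteratedDeriv (j + 1) (fun s => s ^ (j + 1) * f s) t
    set b := iteratedDeriv (n - j) (fun s => s ^ (n - j) * g s) t
    set b' := iteratedDeriv (n + 1 - j) (fun s => s ^ (n + 1 - j) * g s) t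
    set da := deriv (iteratedDeriv j (fun s => s ^ j * f s)) t
    set db := deriv (iteratedDeriv (n - j) (fun s => s ^ (n - j) * g s)) t
    linear_combination (n.choose j : ℝ) * b * e1 + (n.choose j : ℝ) * a * e2
  have expand : ∑ j ∈ Finset.range (n + 1), (n.choose j : ℝ) *
        (iteratedDeriv j (fun s => s ^ j * f s) t *
          iteratedDeriv (n + 1 - j) (fun s => s ^ (n + 1 - j) * g s) t)
      = (∑ k ∈ Finset.range (n + 1), (n.choose (k + 1) : ℝ) *
          (iteratedDeriv (k + 1) (fun s => s ^ (k + 1) * f s) t *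
            iteratedDeriv (n - k) (fun s => s ^ (n - k) * g s) t))
        + iteratedDeriv 0 (fun s => s ^ 0 * f s) t *
            iteratedDeriv (n + 1) (fun s => s ^ (n + 1) * g s) t := by
    have h0 : ∑ j ∈ Finset.range (n + 2), (n.choose j : ℝ) *
          (iteratedDeriv j (fun s => s ^ j * f s) t *
            iteratedDeriv (n + 1 - j) (fun s => s ^ (n + 1 - j) * g s) t)
        = ∑ j ∈ Finset.range (n + 1), (n.choose j : ℝ) *
          (iteratedDeriv j (fun s => s ^ j * f s) t *
            iteratedDeriv (n + 1 - j) (fun s => s ^ (n + 1 - j) * g s) t) := by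
      rw [Finset.sum_range_succ, Nat.choose_succ_self]
      simp
    rw [← h0, Finset.sum_range_succ']
    simp [Nat.succ_sub_succ]
  have step2 : DZ.S f g (n + 1) t
      = (∑ j ∈ Finset.range (n + 1), (n.choose j : ℝ) *
          (iteratedDeriv (j + 1) (fun s => s ^ (j + 1) * f s) t *
            iteratedDeriv (n - j) (fun s => s ^ (n - j) * g s) t))
        + ∑ j ∈ Finset.range (n + 1), (n.choose j : ℝ) *
            (iteratedDeriv j (fun s => s ^ j * f s) t *
              iteratedDeriv (n + 1 - j) (fun s => s ^ (n + 1 - j) * g s) t) := by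
    rw [show DZ.S f g (n + 1) t = ∑ k ∈ Finset.range (n + 2), ((n + 1).choose k : ℝ) *
        (iteratedDeriv k (fun s => s ^ k * f s) t *
          iteratedDeriv (n + 1 - k) (fun s => s ^ (n + 1 - k) * g s) t) from rfl,
      Finset.sum_range_succ']
    simp only [Nat.succ_sub_succ, Nat.choose_succ_succ, Nat.cast_add, add_mul,
      Nat.choose_zero_right, Nat.cast_one, one_mul, Nat.sub_zero]
    rw [Finset.sum_add_distrib, expand]
    ring
  rw [step2, step1]

lemma DZ.key {f g : ℝ → ℝ} (hf : ContDiff ℝ ∞ f) (hg : ContDiff ℝ ∞ g) (n : ℕ) (t : ℝ) :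
    iteratedDeriv n (fun s => s ^ n * (f s * g s)) t
      = DZ.S f g n t - (n : ℝ) * DZ.S f g (n - 1) t := by
  induction n generalizing t with
  | zero => simp [DZ.S]
  | succ n ih =>
    have hfg : ContDiff ℝ ∞ (fun s => f s * g s) := hf.mul hg
    have hrec := DZ.pow_rec hfg n t
    have hfun : iteratedDeriv n (fun s => s ^ n * (f s * g s))
        = fun u => DZ.S f g n u - (n : ℝ) * DZ.S f g (n - 1) u := funext fun u => ih u
    rw [hrec, hfun]
    have hd : deriv (fun u => DZ.S f g n u - (n : ℝ) * DZ.S f g (n - 1) u) t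
        = deriv (DZ.S f g n) t - (n : ℝ) * deriv (DZ.S f g (n - 1)) t := by
      rw [deriv_fun_sub (DZ.S_diff hf hg n t) ((DZ.S_diff hf hg (n - 1) t).const_mul _),
        deriv_const_mul _ (DZ.S_diff hf hg (n - 1) t)]
    rw [hd]
    rcases n with _ | m
    · have h0 := DZ.S_rec hf hg 0 t
      simp only [Nat.add_sub_cancel, Nat.zero_sub, Nat.cast_zero, zero_mul, sub_zero,
        Nat.cast_one, Nat.cast_ofNat, Nat.cast_zero] at h0 ⊢
      push_cast
      linear_combination -h0
    · have h1 := DZ.S_rec hf hg (m + 1) t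
      have h2 := DZ.S_rec hf hg m t
      simp only [Nat.add_sub_cancel] at h1 h2 ⊢
      push_cast at h1 h2 ⊢
      linear_combination (-1 : ℝ) * h1 + ((m : ℝ) + 1) * h2


/-- **Leibniz-type identity (Dong–Zhang, Lemma 3.3).** For smooth `f g : ℝ → ℝ`,
any integer `n ≥ 1`, and any `t ∈ ℝ`,
`∂ₜⁿ [tⁿ f(t) g(t)] = ∑_{j=0}^{n} C(n,j) ∂ₜʲ(tʲ f) ∂ₜ^{n-j}(t^{n-j} g)
  − n ∑_{j=0}^{n-1} C(n-1,j) ∂ₜʲ(tʲ f) ∂ₜ^{n-1-j}(t^{n-1-j} g)`. -/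
theorem iteratedDeriv_pow_mul_mul
    (f g : ℝ → ℝ) (hf : ContDiff ℝ (⊤ : ℕ∞) f) (hg : ContDiff ℝ (⊤ : ℕ∞) g)
    (n : ℕ) (hn : 1 ≤ n) (t : ℝ) :
    iteratedDeriv n (fun s => s ^ n * (f s * g s)) t =
      (∑ j ∈ Finset.range (n + 1), (n.choose j : ℝ) *
          (iteratedDeriv j (fun s => s ^ j * f s) t *
            iteratedDeriv (n - j) (fun s => s ^ (n - j) * g s) t))
      - (n : ℝ) * ∑ j ∈ Finset.range n, ((n - 1).choose j : ℝ) *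
          (iteratedDeriv j (fun s => s ^ j * f s) t *
            iteratedDeriv (n - 1 - j) (fun s => s ^ (n - 1 - j) * g s) t) := by
  obtain ⟨m, rfl⟩ : ∃ m, n = m + 1 := ⟨n - 1, (Nat.succ_pred_eq_of_pos hn).symm⟩
  have hf' : ContDiff ℝ ∞ f := hf.of_le (by simp)
  have hg' : ContDiff ℝ ∞ g := hg.of_le (by simp)
  rw [DZ.key hf' hg' (m + 1) t]
  simp only [Nat.add_sub_cancel]
  rfl
end

section
/- There exists a universal constant C > 0 such that for every integer n ≥ 1, Σ_{j=0}^{n} C(n,j) · a_j · a_{n-j} ≤ C · n^{n-1}, where a_0 := 1 and a_j := j^{j-1} for integers j ≥ 1, and C(n,j) denotes the binomial coefficient. Equivalently, 2·n^{n-1} + Σ_{j=1}^{n-1} C(n,j) · j^{j-1} · (n-j)^{n-j-1} ≤ C · n^{n-1} for all n ≥ 1. -/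
/-!
Stirling's bounds `√(2πm) (m/e)^m ≤ m! ≤ e √m (m/e)^m` give, for `j + k = n` with `j, k ≥ 1`,
`C(n,j) j^(j-1) k^(k-1) ≤ (e / 2π) (n / jk)^(3/2) n^(n-1)`. Since `n / jk = 1/j + 1/k`, each term
of the sum is `O(n^(n-1) ((j+1)^(-3/2) + (n-j+1)^(-3/2)))`, and the `p`-series with `p = 3/2`
converges.
-/

open Finset

/-- The coefficient sequence: `a 0 = 1` (convention `0^s = 1`) and `a j = j^(j-1)`
for `j ≥ 1`. -/
noncomputable def kahaneCoeff (j : ℕ) : ℝ := if j = 0 then 1 else (j : ℝ) ^ (j - 1)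

open Real Nat

theorem factorial_le_exp_one_mul_sqrt_mul_div_pow {n : ℕ} (hn : n ≠ 0) :
    (n ! : ℝ) ≤ exp 1 * √n * (n / exp 1) ^ n := by
  obtain ⟨m, rfl⟩ := Nat.exists_eq_succ_of_ne_zero hn
  have h := Stirling.stirlingSeq'_antitone (Nat.zero_le m)
  simp only [Function.comp_apply, Nat.succ_eq_add_one, zero_add, Stirling.stirlingSeq_one] at h
  rw [Stirling.stirlingSeq, div_le_iff₀ (by positivity), Real.sqrt_mul zero_le_two] at h
  calc _ ≤ exp 1 / √2 * (√2 * √((m + 1 : ℕ) : ℝ) * (((m + 1 : ℕ) : ℝ) / exp 1) ^ (m + 1)) := h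
    _ = _ := by field_simp

theorem add_choose_mul_pow_mul_pow_le {j k : ℕ} (hj : j ≠ 0) (hk : k ≠ 0) :
    ((j + k).choose j : ℝ) * j ^ j * k ^ k ≤
      exp 1 / (2 * π) * √((j + k) / (j * k)) * (j + k) ^ (j + k) := by
  have hj' : (0 : ℝ) < j := by positivity
  have hk' : (0 : ℝ) < k := by positivity
  have hn_fact := factorial_le_exp_one_mul_sqrt_mul_div_pow (n := j + k) (by omega)
  have hj_fact := Stirling.le_factorial_stirling j
  have hk_fact := Stirling.le_factorial_stirling k
  rw [Nat.cast_add_choose]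
  push_cast at hn_fact
  calc ((j + k)! / (j ! * k !) : ℝ) * j ^ j * k ^ k
      ≤ exp 1 * √(j + k) * ((j + k) / exp 1) ^ (j + k) /
          (√(2 * π * j) * (j / exp 1) ^ j * (√(2 * π * k) * (k / exp 1) ^ k)) * j ^ j * k ^ k := by
        gcongr
    _ = _ := by
        rw [Real.sqrt_div (by positivity), Real.sqrt_mul hj'.le,
          Real.sqrt_mul (by positivity : (0 : ℝ) ≤ 2 * π) j,
          Real.sqrt_mul (by positivity : (0 : ℝ) ≤ 2 * π) k, div_pow, div_pow, div_pow,
          pow_add (exp 1)]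
        field_simp
        rw [Real.sq_sqrt (by positivity)]

theorem add_choose_mul_pow_pred_mul_pow_pred_le {j k : ℕ} (hj : j ≠ 0) (hk : k ≠ 0) :
    ((j + k).choose j : ℝ) * j ^ (j - 1) * k ^ (k - 1) ≤
      exp 1 / (2 * π) * ((j + k) / (j * k)) ^ (3 / 2 : ℝ) * (j + k) ^ (j + k - 1) := by
  have hj' : (0 : ℝ) < j := by positivity
  have hk' : (0 : ℝ) < k := by positivity
  have hx : (0 : ℝ) < (j + k) / (j * k) := by positivity
  have h32 : ((j + k) / (j * k) : ℝ) ^ (3 / 2 : ℝ) = (j + k) / (j * k) * √((j + k) / (j * k)) := by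
    rw [Real.sqrt_eq_rpow, ← Real.rpow_one_add' hx.le (by norm_num)]
    norm_num
  have hpow (n : ℕ) (hn : n ≠ 0) (x : ℝ) : x ^ n = x ^ (n - 1) * x := by
    rw [← pow_succ, Nat.sub_add_cancel (Nat.one_le_iff_ne_zero.mpr hn)]
  rw [← mul_le_mul_iff_of_pos_right (mul_pos hj' hk'), h32]
  calc _ = ((j + k).choose j : ℝ) * j ^ j * k ^ k := by
        rw [hpow j hj, hpow k hk]; ring
    _ ≤ exp 1 / (2 * π) * √((j + k) / (j * k)) * (j + k) ^ (j + k) :=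
        add_choose_mul_pow_mul_pow_le hj hk
    _ = _ := by
        rw [hpow (j + k) (by omega)]
        field_simp

theorem add_rpow_le_two_rpow_mul_add_rpow {a b p : ℝ} (ha : 0 ≤ a) (hb : 0 ≤ b) (hp : 0 ≤ p) :
    (a + b) ^ p ≤ 2 ^ p * (a ^ p + b ^ p) := by
  wlog hab : a ≤ b generalizing a b with H
  · simpa only [add_comm] using H hb ha (le_of_not_ge hab)
  calc (a + b) ^ p ≤ (2 * b) ^ p := by gcongr; linarith
    _ = 2 ^ p * b ^ p := Real.mul_rpow zero_le_two hb
    _ ≤ 2 ^ p * (a ^ p + b ^ p) := by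
        gcongr
        exact le_add_of_nonneg_left (Real.rpow_nonneg ha p)

theorem add_div_mul_rpow_three_halves_le {j k : ℕ} (hj : j ≠ 0) (hk : k ≠ 0) :
    ((j + k) / (j * k) : ℝ) ^ (3 / 2 : ℝ) ≤
      8 * ((((j : ℝ) + 1) ^ (3 / 2 : ℝ))⁻¹ + (((k : ℝ) + 1) ^ (3 / 2 : ℝ))⁻¹) := by
  have hj' : (1 : ℝ) ≤ j := by exact_mod_cast Nat.one_le_iff_ne_zero.mpr hj
  have hk' : (1 : ℝ) ≤ k := by exact_mod_cast Nat.one_le_iff_ne_zero.mpr hk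
  have hx : ((j + k) / (j * k) : ℝ) ≤ 2 * (((j : ℝ) + 1)⁻¹ + ((k : ℝ) + 1)⁻¹) := by
    rw [div_le_iff₀ (by positivity)]
    field_simp
    nlinarith [mul_nonneg (sub_nonneg.2 hj') (sub_nonneg.2 hk')]
  have h8 : (2 : ℝ) ^ (3 / 2 : ℝ) * 2 ^ (3 / 2 : ℝ) = 8 := by
    rw [← Real.rpow_add two_pos]; norm_num
  calc ((j + k) / (j * k) : ℝ) ^ (3 / 2 : ℝ)
      ≤ (2 * (((j : ℝ) + 1)⁻¹ + ((k : ℝ) + 1)⁻¹)) ^ (3 / 2 : ℝ) := by gcongr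
    _ ≤ 2 ^ (3 / 2 : ℝ) * (2 ^ (3 / 2 : ℝ) *
          (((j : ℝ) + 1)⁻¹ ^ (3 / 2 : ℝ) + ((k : ℝ) + 1)⁻¹ ^ (3 / 2 : ℝ))) := by
        rw [Real.mul_rpow zero_le_two (by positivity)]
        gcongr
        exact add_rpow_le_two_rpow_mul_add_rpow (by positivity) (by positivity) (by norm_num)
    _ = _ := by
        rw [← mul_assoc, h8, Real.inv_rpow (by positivity), Real.inv_rpow (by positivity)]

-- The shift `j + 1` lets one bound cover the end terms `j = 0` and `j = n` as well.
theorem choose_mul_kahaneCoeff_mul_kahaneCoeff_le {n j : ℕ} (hn : n ≠ 0) (hj : j ≤ n) :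
    (n.choose j : ℝ) * kahaneCoeff j * kahaneCoeff (n - j) ≤
      4 * n ^ (n - 1) *
        ((((j : ℝ) + 1) ^ (3 / 2 : ℝ))⁻¹ + ((((n - j : ℕ) : ℝ) + 1) ^ (3 / 2 : ℝ))⁻¹) := by
  have hw (i : ℕ) : 0 ≤ (((i : ℝ) + 1) ^ (3 / 2 : ℝ))⁻¹ := by positivity
  obtain rfl | hj0 := eq_or_ne j 0
  · simp only [kahaneCoeff, hn, choose_zero_right, tsub_zero, ↓reduceIte, cast_one, one_mul,
      mul_one, CharP.cast_eq_zero, zero_add, one_rpow, inv_one]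
    nlinarith [hw n, pow_nonneg (Nat.cast_nonneg n : (0 : ℝ) ≤ n) (n - 1)]
  obtain rfl | hjn := eq_or_ne j n
  · simp only [kahaneCoeff, hn, choose_self, tsub_self, ↓reduceIte, cast_one, one_mul,
      mul_one, CharP.cast_eq_zero, zero_add, one_rpow, inv_one]
    nlinarith [hw j, pow_nonneg (Nat.cast_nonneg j : (0 : ℝ) ≤ j) (j - 1)]
  obtain ⟨k, rfl⟩ := Nat.exists_eq_add_of_le hj
  have hk : k ≠ 0 := by omega
  have he : exp 1 / (2 * π) * 8 ≤ 4 := by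
    rw [div_mul_eq_mul_div, div_le_iff₀ (by positivity)]
    linarith [exp_one_lt_d9, pi_gt_three]
  simp only [kahaneCoeff, hj0, hk, if_false, Nat.add_sub_cancel_left]
  push_cast
  calc _ ≤ exp 1 / (2 * π) * ((j + k) / (j * k)) ^ (3 / 2 : ℝ) * (j + k) ^ (j + k - 1) :=
        add_choose_mul_pow_pred_mul_pow_pred_le hj0 hk
    _ ≤ exp 1 / (2 * π) *
          (8 * ((((j : ℝ) + 1) ^ (3 / 2 : ℝ))⁻¹ + (((k : ℝ) + 1) ^ (3 / 2 : ℝ))⁻¹)) *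
          (j + k) ^ (j + k - 1) := by
        gcongr; exact add_div_mul_rpow_three_halves_le hj0 hk
    _ ≤ _ := by
        rw [← mul_assoc, mul_right_comm _ _ ((j + k : ℝ) ^ _)]
        gcongr

/-- **Kahane combinatorial inequality.** There is a universal constant `C > 0` such
that for every `n ≥ 1`,
`∑_{j=0}^{n} C(n,j) a_j a_{n-j} ≤ C n^{n-1}`, where `a_0 = 1` and `a_j = j^{j-1}`;
equivalently `2 n^{n-1} + ∑_{j=1}^{n-1} C(n,j) j^{j-1} (n-j)^{n-j-1} ≤ C n^{n-1}`. -/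
theorem kahane_combinatorial_inequality :
    ∃ C : ℝ, 0 < C ∧ ∀ n : ℕ, 1 ≤ n →
      (∑ j ∈ Finset.range (n + 1),
          (n.choose j : ℝ) * kahaneCoeff j * kahaneCoeff (n - j))
        ≤ C * (n : ℝ) ^ (n - 1) := by
  set w : ℕ → ℝ := fun j ↦ (((j : ℝ) + 1) ^ (3 / 2 : ℝ))⁻¹
  have hw_nonneg (j : ℕ) : 0 ≤ w j := by positivity
  have hw : Summable w := by
    have := (summable_nat_add_iff 1).mpr (summable_nat_rpow_inv.mpr (by norm_num : (1 : ℝ) < 3 / 2))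
    simpa only [Nat.cast_add, Nat.cast_one] using this
  refine ⟨8 * ∑' j, w j, mul_pos (by norm_num) (hw.tsum_pos hw_nonneg 0 (by positivity)),
    fun n hn ↦ ?_⟩
  have hsym : ∑ j ∈ range (n + 1), w (n - j) = ∑ j ∈ range (n + 1), w j := by
    simpa only [Nat.add_sub_cancel] using sum_range_reflect w (n + 1)
  calc _ ≤ ∑ j ∈ range (n + 1), 4 * (n : ℝ) ^ (n - 1) * (w j + w (n - j)) :=
        sum_le_sum fun j hj ↦
          choose_mul_kahaneCoeff_mul_kahaneCoeff_le (by omega) (Nat.lt_succ_iff.mp (mem_range.mp hj))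
    _ = 8 * (n : ℝ) ^ (n - 1) * ∑ j ∈ range (n + 1), w j := by
        rw [← mul_sum, sum_add_distrib, hsym]; ring
    _ ≤ 8 * (n : ℝ) ^ (n - 1) * ∑' j, w j := by
        gcongr; exact hw.sum_le_tsum _ fun j _ ↦ hw_nonneg j
    _ = _ := by ring
end

section
/- Let V be a real normed vector space, let p be a seminorm on the real vector space of all functions from ℝ to V, and let u : ℝ → V be a smooth function. Suppose ρ > 0 and C > 0 are constants such that for every n ∈ ℕ, p( t ↦ (d/dt)^n ( t^n u(t) ) ) ≤ ρ^{−1} C^n n^n (with the convention 0^0 = 1, so the case n = 0 reads p(u) ≤ ρ^{−1}). Then for every n ∈ ℕ, p( t ↦ t^n · (d^n u/dt^n)(t) ) ≤ ρ^{−1} (C+1)^n n^n. -/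
open Finset ContDiff

section Aux

variable {V : Type*} [NormedAddCommGroup V] [NormedSpace ℝ V]

private lemma seminorm_sum_le {ι : Type*} (p : Seminorm ℝ (ℝ → V)) (s : Finset ι)
    (f : ι → (ℝ → V)) : p (∑ i ∈ s, f i) ≤ ∑ i ∈ s, p (f i) := by
  classical
  induction s using Finset.cons_induction with
  | empty => simp
  | cons a s ha ih =>
    rw [Finset.sum_cons, Finset.sum_cons]
    exact (map_add_le_add p _ _).trans (by linarith)

private lemma contDiff_iteratedDeriv {v : ℝ → V} (hv : ContDiff ℝ ∞ v) (k : ℕ) :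
    ContDiff ℝ ∞ (iteratedDeriv k v) := by
  rw [iteratedDeriv_eq_iterate]
  exact hv.iterate_deriv k

/-- Pascal-type recombination of sums. -/
private lemma pascal_sum (W : ℕ → V) (m n : ℕ) :
    ∑ k ∈ range (n + 2), (((n + 1).choose k * m.descFactorial k : ℕ) : ℝ) • W k =
      ∑ k ∈ range (n + 1), ((n.choose k * m.descFactorial k : ℕ) : ℝ) • W k +
        ∑ k ∈ range (n + 1), ((n.choose k * m.descFactorial (k + 1) : ℕ) : ℝ) • W (k + 1) := by
  rw [Finset.sum_range_succ' (fun k => (((n + 1).choose k * m.descFactorial k : ℕ) : ℝ) • W k)]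
  have hsplit : ∀ k, (((n + 1).choose (k + 1) * m.descFactorial (k + 1) : ℕ) : ℝ) • W (k + 1) =
      ((n.choose k * m.descFactorial (k + 1) : ℕ) : ℝ) • W (k + 1) +
        ((n.choose (k + 1) * m.descFactorial (k + 1) : ℕ) : ℝ) • W (k + 1) := by
    intro k
    rw [Nat.choose_succ_succ, Nat.add_mul]
    push_cast
    rw [add_smul]
  have h0 : (((n + 1).choose 0 * m.descFactorial 0 : ℕ) : ℝ) • W 0 =
      ((n.choose 0 * m.descFactorial 0 : ℕ) : ℝ) • W 0 := by norm_num
  rw [Finset.sum_congr rfl (fun k _ => hsplit k), Finset.sum_add_distrib, h0, add_assoc]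
  have h2 : ∑ k ∈ range (n + 1), ((n.choose (k + 1) * m.descFactorial (k + 1) : ℕ) : ℝ) • W (k + 1)
      + ((n.choose 0 * m.descFactorial 0 : ℕ) : ℝ) • W 0 =
      ∑ k ∈ range (n + 1), ((n.choose k * m.descFactorial k : ℕ) : ℝ) • W k := by
    rw [← Finset.sum_range_succ' (fun k => ((n.choose k * m.descFactorial k : ℕ) : ℝ) • W k),
      Finset.sum_range_succ]
    simp
  rw [h2]
  exact add_comm _ _

/-- Leibniz formula for the iterated derivative of `t ^ m • v t`. -/
private lemma iteratedDeriv_pow_smul {v : ℝ → V} (hv : ContDiff ℝ ∞ v) (m : ℕ) :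
    ∀ n : ℕ, iteratedDeriv n (fun t => t ^ m • v t) = fun t =>
      ∑ k ∈ range (n + 1),
        ((n.choose k * m.descFactorial k : ℕ) : ℝ) • t ^ (m - k) • iteratedDeriv (n - k) v t := by
  intro n
  induction n with
  | zero => simp
  | succ n ih =>
    rw [iteratedDeriv_succ, ih]
    funext t
    have hD : ∀ k : ℕ, HasDerivAt
        (fun s : ℝ => ((n.choose k * m.descFactorial k : ℕ) : ℝ) •
          s ^ (m - k) • iteratedDeriv (n - k) v s)
        (((n.choose k * m.descFactorial k : ℕ) : ℝ) •
          (t ^ (m - k) • iteratedDeriv (n - k + 1) v t +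
            (((m - k : ℕ) : ℝ) * t ^ (m - k - 1)) • iteratedDeriv (n - k) v t)) t := by
      intro k
      have h1 : HasDerivAt (fun s : ℝ => s ^ (m - k)) (((m - k : ℕ) : ℝ) * t ^ (m - k - 1)) t :=
        hasDerivAt_pow _ _
      have h2 : HasDerivAt (iteratedDeriv (n - k) v) (iteratedDeriv (n - k + 1) v t) t := by
        rw [iteratedDeriv_succ]
        exact ((contDiff_iteratedDeriv hv (n - k)).differentiable
          (by simp) t).hasDerivAt
      exact (h1.smul h2).const_smul _
    have hsum : HasDerivAt
        (fun s : ℝ => ∑ k ∈ range (n + 1), ((n.choose k * m.descFactorial k : ℕ) : ℝ) •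
          s ^ (m - k) • iteratedDeriv (n - k) v s)
        (∑ k ∈ range (n + 1), ((n.choose k * m.descFactorial k : ℕ) : ℝ) •
          (t ^ (m - k) • iteratedDeriv (n - k + 1) v t +
            (((m - k : ℕ) : ℝ) * t ^ (m - k - 1)) • iteratedDeriv (n - k) v t)) t :=
      HasDerivAt.fun_sum (fun k _ => hD k)
    rw [hsum.deriv]
    have hterm : ∀ k ∈ range (n + 1),
        ((n.choose k * m.descFactorial k : ℕ) : ℝ) •
          (t ^ (m - k) • iteratedDeriv (n - k + 1) v t +
            (((m - k : ℕ) : ℝ) * t ^ (m - k - 1)) • iteratedDeriv (n - k) v t) =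
        ((n.choose k * m.descFactorial k : ℕ) : ℝ) •
          (t ^ (m - k) • iteratedDeriv (n + 1 - k) v t) +
        ((n.choose k * m.descFactorial (k + 1) : ℕ) : ℝ) •
          (t ^ (m - (k + 1)) • iteratedDeriv (n + 1 - (k + 1)) v t) := by
      intro k hk
      rw [Finset.mem_range, Nat.lt_succ_iff] at hk
      have e1 : n - k + 1 = n + 1 - k := by omega
      have e2 : n + 1 - (k + 1) = n - k := by omega
      have e3 : m - k - 1 = m - (k + 1) := by omega
      rw [e1, e2, e3, smul_add]
      congr 1
      rw [smul_smul, smul_smul, ← mul_assoc]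
      congr 1
      have : (m.descFactorial (k + 1) : ℝ) = (m.descFactorial k : ℝ) * ((m - k : ℕ) : ℝ) := by
        rw [Nat.descFactorial_succ]; push_cast; ring
      push_cast [this]
      ring
    rw [Finset.sum_congr rfl hterm, Finset.sum_add_distrib,
      pascal_sum (fun k => t ^ (m - k) • iteratedDeriv (n + 1 - k) v t) m n]

/-- Product identity for the triangular coefficients. -/
private lemma coeff_prod (n j i : ℕ) (hij : i ≤ j) (hjn : j ≤ n) :
    ((n.choose j * n.descFactorial (n - j) : ℕ) : ℝ) *
      ((j.choose i * j.descFactorial (j - i) : ℕ) : ℝ) =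
    ((n.choose i * n.descFactorial (n - i) : ℕ) : ℝ) * ((n - i).choose (j - i) : ℝ) := by
  have d1 : n.descFactorial (n - j) = Nat.factorial (n - j) * n.choose (n - j) :=
    Nat.descFactorial_eq_factorial_mul_choose _ _
  have d2 : j.descFactorial (j - i) = Nat.factorial (j - i) * j.choose (j - i) :=
    Nat.descFactorial_eq_factorial_mul_choose _ _
  have d3 : n.descFactorial (n - i) = Nat.factorial (n - i) * n.choose (n - i) :=
    Nat.descFactorial_eq_factorial_mul_choose _ _
  rw [d1, d2, d3, Nat.choose_symm hjn, Nat.choose_symm hij, Nat.choose_symm (le_trans hij hjn)]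
  push_cast
  rw [Nat.cast_choose ℝ hjn, Nat.cast_choose ℝ hij, Nat.cast_choose ℝ (le_trans hij hjn),
    Nat.cast_choose ℝ (by omega : j - i ≤ n - i)]
  have e : n - i - (j - i) = n - j := by omega
  rw [e]
  have f1 : ((Nat.factorial n : ℕ) : ℝ) ≠ 0 := Nat.cast_ne_zero.mpr (Nat.factorial_ne_zero _)
  have f2 : ((Nat.factorial j : ℕ) : ℝ) ≠ 0 := Nat.cast_ne_zero.mpr (Nat.factorial_ne_zero _)
  have f3 : ((Nat.factorial i : ℕ) : ℝ) ≠ 0 := Nat.cast_ne_zero.mpr (Nat.factorial_ne_zero _)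
  have f4 : ((Nat.factorial (n - j) : ℕ) : ℝ) ≠ 0 := Nat.cast_ne_zero.mpr (Nat.factorial_ne_zero _)
  have f5 : ((Nat.factorial (j - i) : ℕ) : ℝ) ≠ 0 := Nat.cast_ne_zero.mpr (Nat.factorial_ne_zero _)
  have f6 : ((Nat.factorial (n - i) : ℕ) : ℝ) ≠ 0 := Nat.cast_ne_zero.mpr (Nat.factorial_ne_zero _)
  field_simp

/-- The alternating-sign inversion identity for the coefficients. -/
private lemma coeff_inv (n i : ℕ) (hi : i ≤ n) :
    ∑ j ∈ Icc i n, ((-1 : ℝ) ^ (n - j) * ((n.choose j * n.descFactorial (n - j) : ℕ) : ℝ) *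
      ((j.choose i * j.descFactorial (j - i) : ℕ) : ℝ)) = if i = n then 1 else 0 := by
  have step : ∀ j ∈ Icc i n,
      (-1 : ℝ) ^ (n - j) * ((n.choose j * n.descFactorial (n - j) : ℕ) : ℝ) *
        ((j.choose i * j.descFactorial (j - i) : ℕ) : ℝ) =
      ((n.choose i * n.descFactorial (n - i) : ℕ) : ℝ) *
        ((-1 : ℝ) ^ (n - j) * ((n - i).choose (j - i) : ℝ)) := by
    intro j hj
    rw [Finset.mem_Icc] at hj
    rw [mul_assoc, coeff_prod n j i hj.1 hj.2]
    ring
  rw [Finset.sum_congr rfl step, ← Finset.mul_sum]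
  have reindex : ∑ j ∈ Icc i n, ((-1 : ℝ) ^ (n - j) * ((n - i).choose (j - i) : ℝ)) =
      ∑ d ∈ range (n - i + 1), ((-1 : ℝ) ^ (n - i - d) * ((n - i).choose d : ℝ)) := by
    rw [← Finset.Ico_add_one_right_eq_Icc, Finset.sum_Ico_eq_sum_range]
    have : n + 1 - i = n - i + 1 := by omega
    rw [this]
    refine Finset.sum_congr rfl (fun d hd => ?_)
    rw [Finset.mem_range] at hd
    have e1 : n - (i + d) = n - i - d := by omega
    have e2 : i + d - i = d := by omega
    rw [e1, e2]
  rw [reindex]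
  set m := n - i with hm
  have alt : ∑ d ∈ range (m + 1), ((-1 : ℝ) ^ (m - d) * (m.choose d : ℝ)) =
      if m = 0 then 1 else 0 := by
    have : ∀ d ∈ range (m + 1), (-1 : ℝ) ^ (m - d) * (m.choose d : ℝ) =
        (-1 : ℝ) ^ m * ((-1 : ℝ) ^ d * (m.choose d : ℝ)) := by
      intro d hd
      rw [Finset.mem_range, Nat.lt_succ_iff] at hd
      have h1 : (-1 : ℝ) ^ (m - d) * (-1 : ℝ) ^ d = (-1 : ℝ) ^ m := by
        rw [← pow_add]; congr 1; omega
      have hdd : (-1 : ℝ) ^ d * (-1 : ℝ) ^ d = 1 := by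
        rw [← pow_add, ← two_mul, pow_mul]; norm_num
      have key : (-1 : ℝ) ^ (m - d) = (-1 : ℝ) ^ m * (-1 : ℝ) ^ d := by
        calc (-1 : ℝ) ^ (m - d) = (-1 : ℝ) ^ (m - d) * ((-1 : ℝ) ^ d * (-1 : ℝ) ^ d) := by
              rw [hdd, mul_one]
          _ = ((-1 : ℝ) ^ (m - d) * (-1 : ℝ) ^ d) * (-1 : ℝ) ^ d := by ring
          _ = (-1 : ℝ) ^ m * (-1 : ℝ) ^ d := by rw [h1]
      rw [key]
      ring
    rw [Finset.sum_congr rfl this, ← Finset.mul_sum]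
    have intver := Int.alternating_sum_range_choose (n := m)
    have : ∑ d ∈ range (m + 1), ((-1 : ℝ) ^ d * (m.choose d : ℝ)) =
        (((∑ d ∈ range (m + 1), ((-1 : ℤ) ^ d * (m.choose d : ℤ))) : ℤ) : ℝ) := by
      push_cast; rfl
    rw [this, intver]
    by_cases hm0 : m = 0
    · simp [hm0]
    · simp [hm0]
  rw [alt]
  by_cases hin : i = n
  · subst hin
    have : m = 0 := by omega
    simp [this]
  · have : m ≠ 0 := by omega
    simp [hin, this]

end Aux

section Main

variable {V : Type*} [NormedAddCommGroup V] [NormedSpace ℝ V]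

private lemma F_eq (u : ℝ → V) (hu : ContDiff ℝ ∞ u) (n : ℕ) :
    iteratedDeriv n (fun s => s ^ n • u s) =
      ∑ j ∈ range (n + 1), ((n.choose j * n.descFactorial (n - j) : ℕ) : ℝ) •
        (fun t : ℝ => t ^ j • iteratedDeriv j u t) := by
  rw [iteratedDeriv_pow_smul hu n n]
  funext t
  rw [Finset.sum_apply]
  have hrefl := Finset.sum_range_reflect
    (fun j => ((n.choose j * n.descFactorial (n - j) : ℕ) : ℝ) •
      (t ^ j • iteratedDeriv j u t)) (n + 1)
  simp only [Nat.add_sub_cancel] at hrefl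
  calc ∑ k ∈ range (n + 1), ((n.choose k * n.descFactorial k : ℕ) : ℝ) •
        t ^ (n - k) • iteratedDeriv (n - k) u t
      = ∑ k ∈ range (n + 1), ((n.choose (n - k) * n.descFactorial (n - (n - k)) : ℕ) : ℝ) •
        (t ^ (n - k) • iteratedDeriv (n - k) u t) := by
        refine Finset.sum_congr rfl (fun k hk => ?_)
        rw [Finset.mem_range, Nat.lt_succ_iff] at hk
        have e1 : n - (n - k) = k := by omega
        rw [e1, Nat.choose_symm hk]
    _ = ∑ j ∈ range (n + 1), ((n.choose j * n.descFactorial (n - j) : ℕ) : ℝ) •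
        (t ^ j • iteratedDeriv j u t) := hrefl
    _ = _ := by
        refine Finset.sum_congr rfl (fun j _ => ?_)
        simp

private lemma G_eq (u : ℝ → V) (hu : ContDiff ℝ ∞ u) (n : ℕ) :
    (fun t : ℝ => t ^ n • iteratedDeriv n u t) =
      ∑ j ∈ range (n + 1),
        ((-1 : ℝ) ^ (n - j) * ((n.choose j * n.descFactorial (n - j) : ℕ) : ℝ)) •
          iteratedDeriv j (fun s => s ^ j • u s) := by
  symm
  calc ∑ j ∈ range (n + 1),
        ((-1 : ℝ) ^ (n - j) * ((n.choose j * n.descFactorial (n - j) : ℕ) : ℝ)) •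
          iteratedDeriv j (fun s => s ^ j • u s)
      = ∑ j ∈ range (n + 1),
        ((-1 : ℝ) ^ (n - j) * ((n.choose j * n.descFactorial (n - j) : ℕ) : ℝ)) •
          ∑ i ∈ range (j + 1), ((j.choose i * j.descFactorial (j - i) : ℕ) : ℝ) •
            (fun t : ℝ => t ^ i • iteratedDeriv i u t) := by
        exact Finset.sum_congr rfl (fun j _ => by rw [F_eq u hu j])
    _ = ∑ j ∈ range (n + 1), ∑ i ∈ range (j + 1),
        ((-1 : ℝ) ^ (n - j) * ((n.choose j * n.descFactorial (n - j) : ℕ) : ℝ) *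
          ((j.choose i * j.descFactorial (j - i) : ℕ) : ℝ)) •
            (fun t : ℝ => t ^ i • iteratedDeriv i u t) := by
        refine Finset.sum_congr rfl (fun j _ => ?_)
        rw [Finset.smul_sum]
        refine Finset.sum_congr rfl (fun i _ => ?_)
        rw [smul_smul]
    _ = ∑ i ∈ range (n + 1), ∑ j ∈ Icc i n,
        ((-1 : ℝ) ^ (n - j) * ((n.choose j * n.descFactorial (n - j) : ℕ) : ℝ) *
          ((j.choose i * j.descFactorial (j - i) : ℕ) : ℝ)) •
            (fun t : ℝ => t ^ i • iteratedDeriv i u t) := by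
        refine Finset.sum_comm' ?_
        intro j i
        simp only [Finset.mem_range, Finset.mem_Icc, Nat.lt_succ_iff]
        omega
    _ = ∑ i ∈ range (n + 1), (if i = n then (1 : ℝ) else 0) •
        (fun t : ℝ => t ^ i • iteratedDeriv i u t) := by
        refine Finset.sum_congr rfl (fun i hi => ?_)
        rw [Finset.mem_range, Nat.lt_succ_iff] at hi
        rw [← Finset.sum_smul, coeff_inv n i hi]
    _ = (fun t : ℝ => t ^ n • iteratedDeriv n u t) := by
        simp only [ite_smul, zero_smul, one_smul]
        rw [Finset.sum_ite_eq' (range (n + 1)) n]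
        simp

end Main

/-- **Equivalence of Gevrey-type bounds, direction 1.** Let `p` be a seminorm on
the space of functions `ℝ → V` (`V` a real normed vector space) and `u : ℝ → V`
smooth. If `p(∂ₜⁿ(tⁿ u)) ≤ ρ⁻¹ Cⁿ nⁿ` for all `n ∈ ℕ` (with `0⁰ = 1`), then
`p(tⁿ ∂ₜⁿ u) ≤ ρ⁻¹ (C+1)ⁿ nⁿ` for all `n ∈ ℕ`. -/
theorem gevrey_bound_deriv_pow_to_pow_deriv
    {V : Type*} [NormedAddCommGroup V] [NormedSpace ℝ V]
    (p : Seminorm ℝ (ℝ → V)) (u : ℝ → V) (hu : ContDiff ℝ (⊤ : ℕ∞) u)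
    (ρ C : ℝ) (hρ : 0 < ρ) (hC : 0 < C)
    (h : ∀ n : ℕ, p (fun t => iteratedDeriv n (fun s => s ^ n • u s) t) ≤
      ρ⁻¹ * C ^ n * (n : ℝ) ^ n) :
    ∀ n : ℕ, p (fun t => t ^ n • iteratedDeriv n u t) ≤
      ρ⁻¹ * (C + 1) ^ n * (n : ℝ) ^ n := by
  intro n
  have hu' : ContDiff ℝ ∞ u := hu.of_le (by simp)
  have hrep := G_eq u hu' n
  rw [hrep]
  have step1 : p (∑ j ∈ range (n + 1),
      ((-1 : ℝ) ^ (n - j) * ((n.choose j * n.descFactorial (n - j) : ℕ) : ℝ)) •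
        iteratedDeriv j (fun s => s ^ j • u s)) ≤
      ∑ j ∈ range (n + 1), ((n.choose j * n.descFactorial (n - j) : ℕ) : ℝ) *
        (ρ⁻¹ * C ^ j * (j : ℝ) ^ j) := by
    refine (seminorm_sum_le p _ _).trans (Finset.sum_le_sum (fun j hj => ?_))
    rw [map_smul_eq_mul]
    have habs : ‖(-1 : ℝ) ^ (n - j) * ((n.choose j * n.descFactorial (n - j) : ℕ) : ℝ)‖ =
        ((n.choose j * n.descFactorial (n - j) : ℕ) : ℝ) := by
      rw [Real.norm_eq_abs, abs_mul, abs_pow, abs_neg, abs_one, one_pow, one_mul,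
        abs_of_nonneg (by positivity)]
    rw [habs]
    have := h j
    have hnn : (0 : ℝ) ≤ ((n.choose j * n.descFactorial (n - j) : ℕ) : ℝ) := by positivity
    exact mul_le_mul_of_nonneg_left (by exact this) hnn
  refine step1.trans ?_
  have step2 : ∀ j ∈ range (n + 1),
      ((n.choose j * n.descFactorial (n - j) : ℕ) : ℝ) * (ρ⁻¹ * C ^ j * (j : ℝ) ^ j) ≤
      ρ⁻¹ * (n : ℝ) ^ n * ((C ^ j * 1 ^ (n - j)) * (n.choose j : ℝ)) := by
    intro j hj
    rw [Finset.mem_range, Nat.lt_succ_iff] at hj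
    have h1 : ((n.descFactorial (n - j) : ℕ) : ℝ) ≤ (n : ℝ) ^ (n - j) := by
      exact_mod_cast Nat.descFactorial_le_pow n (n - j)
    have h2 : ((j : ℝ)) ^ j ≤ ((n : ℝ)) ^ j :=
      pow_le_pow_left₀ (by positivity) (by exact_mod_cast hj) j
    have hmain : ((n.choose j * n.descFactorial (n - j) : ℕ) : ℝ) * (ρ⁻¹ * C ^ j * (j : ℝ) ^ j) ≤
        ((n.choose j : ℝ) * (n : ℝ) ^ (n - j)) * (ρ⁻¹ * C ^ j * (n : ℝ) ^ j) := by
      push_cast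
      have e1 : (0:ℝ) ≤ (n.choose j : ℝ) := by positivity
      have e2 : (0:ℝ) ≤ ρ⁻¹ * C ^ j := by positivity
      calc (n.choose j : ℝ) * (n.descFactorial (n - j) : ℝ) * (ρ⁻¹ * C ^ j * (j : ℝ) ^ j)
          ≤ (n.choose j : ℝ) * (n : ℝ) ^ (n - j) * (ρ⁻¹ * C ^ j * (j : ℝ) ^ j) := by
            have : (0:ℝ) ≤ ρ⁻¹ * C ^ j * (j : ℝ) ^ j := by positivity
            nlinarith [mul_le_mul_of_nonneg_left h1 e1]
        _ ≤ (n.choose j : ℝ) * (n : ℝ) ^ (n - j) * (ρ⁻¹ * C ^ j * (n : ℝ) ^ j) := by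
            have : (0:ℝ) ≤ (n.choose j : ℝ) * (n : ℝ) ^ (n - j) := by positivity
            have := mul_le_mul_of_nonneg_left (mul_le_mul_of_nonneg_left h2 e2) this
            calc (n.choose j : ℝ) * (n : ℝ) ^ (n - j) * (ρ⁻¹ * C ^ j * (j : ℝ) ^ j)
                = (n.choose j : ℝ) * (n : ℝ) ^ (n - j) * (ρ⁻¹ * C ^ j * ((j:ℝ) ^ j)) := by ring
              _ ≤ _ := by nlinarith [pow_nonneg (le_of_lt hC) j]
    refine hmain.trans (le_of_eq ?_)
    have epow : (n : ℝ) ^ (n - j) * (n : ℝ) ^ j = (n : ℝ) ^ n := by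
      rw [← pow_add]
      congr 1
      omega
    rw [one_pow]
    calc (n.choose j : ℝ) * (n : ℝ) ^ (n - j) * (ρ⁻¹ * C ^ j * (n : ℝ) ^ j)
        = ρ⁻¹ * ((n : ℝ) ^ (n - j) * (n : ℝ) ^ j) * (C ^ j * (n.choose j : ℝ)) := by ring
      _ = ρ⁻¹ * (n : ℝ) ^ n * (C ^ j * 1 * (n.choose j : ℝ)) := by rw [epow]; ring
      _ = _ := by ring
  refine (Finset.sum_le_sum step2).trans (le_of_eq ?_)
  rw [← Finset.mul_sum, ← add_pow C 1 n]
  ring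
end
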